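/- arXiv:2009.08540 — 4 statements merged into one kernel-verified Lean document; each statement's English description precedes it below -/
import Mathlib

section
/- Let λ : H → k be a partial action of a Hopf algebra H on k, g, t ∈ G(H), and x a (g,t)-primitive element. If λ(g) = 1 and λ(t) = 0, then λ(x t⁻¹) = −λ(x), where t⁻¹ = S(t) is the inverse of the group-like t. -/
open TensorProduct Coalgebra HopfAlgebra

variable (k : Type*) [Field k]

/-- The convolution-type expression `h ↦ l(h₁) m(h₂)` (Sweedler notation). -/
noncomputable def pconv {H : Type*} [Ring H] [Bialgebra k H] (l m : H →ₗ[k] k) : H →ₗ[k] k :=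
  (TensorProduct.lid k k).toLinearMap ∘ₗ TensorProduct.map l m ∘ₗ comul

/-- A partial action of the Hopf (bi)algebra `H` on its base field `k`:
`l 1 = 1` and `l h * l v = l h₁ * l (h₂ * v)` for all `h v`. -/
def IsPartialAction {H : Type*} [Ring H] [Bialgebra k H] (l : H →ₗ[k] k) : Prop :=
  l 1 = 1 ∧ ∀ h v : H, l h * l v = pconv k l (l ∘ₗ LinearMap.mulRight k v) h

/-- The map `h ↦ l(h₁) h₂` (Sweedler notation). -/
noncomputable def lamL {H : Type*} [Ring H] [Bialgebra k H] (l : H →ₗ[k] k) : H →ₗ[k] H :=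
  (TensorProduct.lid k H).toLinearMap ∘ₗ TensorProduct.map l LinearMap.id ∘ₗ comul

/-- The map `h ↦ h₁ l(h₂)` (Sweedler notation); note `lamL l (lamR l h) = l(h₁) h₂ l(h₃)`. -/
noncomputable def lamR {H : Type*} [Ring H] [Bialgebra k H] (l : H →ₗ[k] k) : H →ₗ[k] H :=
  (TensorProduct.rid k H).toLinearMap ∘ₗ TensorProduct.map LinearMap.id l ∘ₗ comul

/-- A group-like element: nonzero with `Δ g = g ⊗ g`. -/
def IsGroupLikeElemNZ {H : Type*} [Ring H] [Bialgebra k H] (g : H) : Prop :=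
  g ≠ 0 ∧ comul (R := k) g = g ⊗ₜ[k] g

theorem IsGroupLikeElemNZ.isGroupLikeElem {H : Type*} [Ring H] [Bialgebra k H] {t : H}
    (ht : IsGroupLikeElemNZ k t) : IsGroupLikeElem k t := by
  refine ⟨?_, ht.2⟩
  have hcounit : counit (R := k) t • t = (1 : k) • t := by
    simpa [ht.2] using congrArg (TensorProduct.lid k H) (Coalgebra.rTensor_counit_comul (R := k) t)
  exact smul_left_injective k ht.1 hcounit

theorem comul_mul_of_isGroupLikeElem {R A : Type*} [CommSemiring R] [Semiring A] [Bialgebra R A]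
    {x a b y : A} (hx : comul (R := R) x = x ⊗ₜ[R] a + b ⊗ₜ[R] x) (hy : IsGroupLikeElem R y) :
    comul (R := R) (x * y) = (x * y) ⊗ₜ[R] (a * y) + (b * y) ⊗ₜ[R] (x * y) := by
  rw [Bialgebra.comul_mul, hx, hy.comul_eq_tmul_self, add_mul,
    Algebra.TensorProduct.tmul_mul_tmul, Algebra.TensorProduct.tmul_mul_tmul]

theorem pconv_apply_of_comul_eq {H : Type*} [Ring H] [Bialgebra k H] (l m : H →ₗ[k] k)
    {h a b : H} (hh : comul (R := k) h = h ⊗ₜ[k] a + b ⊗ₜ[k] h) :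
    pconv k l m h = l h * m a + l b * m h := by
  simp [pconv, hh]

theorem partialAction_skewPrimitive_inv {H : Type*} [Ring H] [HopfAlgebra k H]
    {l : H →ₗ[k] k} (hpa : IsPartialAction k l) {g t x : H}
    (ht : IsGroupLikeElemNZ k t)
    (hx : comul (R := k) x = x ⊗ₜ[k] g + t ⊗ₜ[k] x)
    (hg1 : l g = 1) (ht0 : l t = 0) :
    l (x * antipode (R := k) t) = - l x := by
  have ht' := ht.isGroupLikeElem
  have hcomul := comul_mul_of_isGroupLikeElem hx ht'.antipode
  rw [ht'.mul_antipode_cancel] at hcomul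
  -- `x t⁻¹` is `(g t⁻¹, 1)`-primitive, so the partial action axiom for `h = x t⁻¹`, `v = t`
  -- reads `0 = l (x t⁻¹) + l x`.
  have key := hpa.2 (x * antipode (R := k) t) t
  rw [pconv_apply_of_comul_eq k _ _ hcomul] at key
  simp only [LinearMap.comp_apply, LinearMap.mulRight_apply, mul_assoc,
    ht'.antipode_mul_cancel, mul_one, ht0, hg1, hpa.1, mul_zero, one_mul] at key
  linear_combination -key
end

section
/- Let H be a finite-dimensional Hopf algebra and λ : H → k a partial action of H on k. Then H_λ = {λ(h₁)h₂ | h ∈ H} is a Hopf subalgebra of H if and only if λ(h₁)h₂ = λ(h₁)h₂λ(h₃) holds for all h ∈ H. -/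
open TensorProduct Coalgebra HopfAlgebra

variable (k : Type*) [Field k]

/-- A group-like element: nonzero with `Δ g = g ⊗ g`. -/
def IsGroupLikeElem' {H : Type*} [Ring H] [Bialgebra k H] (g : H) : Prop :=
  g ≠ 0 ∧ comul (R := k) g = g ⊗ₜ[k] g

/-!
If `Δ(H_λ) ⊆ H_λ ⊗ H_λ`, then since `λ = ε` on `H_λ` every `a ∈ H_λ` satisfies
`a₁ λ(a₂) = a₁ ε(a₂) = a`; applied to `a = λ(h₁)h₂`, and because the left and right hit actions
`h ↦ λ(h₁)h₂` and `h ↦ h₁λ(h₂)` commute, this is the identity `λ(h₁)h₂ = λ(h₁)h₂λ(h₃)`.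

Conversely, that identity gives `Δ(λ(h₁)h₂) = λ(h₁)h₂ ⊗ λ(h₃)h₄`, and the partial action axiom
makes `H_λ` a subalgebra, so `H_λ` is a finite-dimensional subbialgebra. For the antipode, let
`e = λ(·₁)·₂`, a projection onto `H_λ`, and work in the convolution algebra `Hom(H, H)`.
There `S ∘ e` is a left inverse of `e` relative to the idempotent `ηε ∘ e`, which is the unit of
the finite-dimensional space `End(H_λ)` of maps `f = f ∘ e` with values in `H_λ`. Left convolution
by `e` is injective on `End(H_λ)`, hence surjective, and the preimage of `ηε ∘ e` must be `S ∘ e`;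
so `S(H_λ) ⊆ H_λ`.
-/

open LinearMap WithConv

theorem Submodule.mem_of_mul_left_inverse_on {K A : Type*} [Field K] [Ring A] [Algebra K A]
    [FiniteDimensional K A] (W : Submodule K A)
    {a b : A} (ha : ∀ w ∈ W, a * w ∈ W) (hba : b * a ∈ W) (hbaw : ∀ w ∈ W, b * a * w = w)
    (hb : b * (b * a) = b) : b ∈ W := by
  let L : W →ₗ[K] W := (LinearMap.mulLeft K a).restrict ha
  have hL : Function.Injective L := fun v w hvw => Subtype.ext <| by
    rw [← hbaw v v.2, ← hbaw w w.2, mul_assoc, mul_assoc]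
    exact congrArg (fun u : W => b * (u : A)) hvw
  obtain ⟨z, hz⟩ := LinearMap.injective_iff_surjective.mp hL ⟨b * a, hba⟩
  have hz' : a * z = b * a := congrArg Subtype.val hz
  rw [← hb, ← hz', ← mul_assoc, hbaw z z.2]
  exact z.2

instance {R A : Type*} [Semiring R] [AddCommMonoid A] [Module R A] [Module.Finite R A] :
    Module.Finite R (WithConv A) :=
  Module.Finite.equiv (WithConv.linearEquiv R A).symm

section Convolution

variable {k}

/-- `End (range e)` for a projection `e`, embedded in the convolution algebra by `f ↦ f ∘ e`. -/
def rangeEnd {M : Type*} [AddCommGroup M] [Module k M] (e : M →ₗ[k] M) :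
    Submodule k (WithConv (M →ₗ[k] M)) where
  carrier := {f | f.ofConv ∘ₗ e = f.ofConv ∧ ∀ x, f x ∈ range e}
  add_mem' hf hg := ⟨by simp [add_comp, hf.1, hg.1], fun x => add_mem (hf.2 x) (hg.2 x)⟩
  zero_mem' := ⟨zero_comp _, fun _ => zero_mem _⟩
  smul_mem' c f hf := ⟨by simp [smul_comp, hf.1], fun x => Submodule.smul_mem _ c (hf.2 x)⟩

variable {H : Type*} [Ring H]

lemma convMul_comp_of_comul_comp [Bialgebra k H] {e : H →ₗ[k] H}
    (he : comul ∘ₗ e = TensorProduct.map e e ∘ₗ comul) (f g : WithConv (H →ₗ[k] H)) :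
    toConv (f.ofConv ∘ₗ e) * toConv (g.ofConv ∘ₗ e) = toConv ((f * g).ofConv ∘ₗ e) := by
  simp only [LinearMap.convMul_def, ofConv_toConv, TensorProduct.map_comp, comp_assoc, he]

lemma convMul_apply_mem_range [Bialgebra k H] {e : H →ₗ[k] H}
    (hmul : ∀ a ∈ range e, ∀ b ∈ range e, a * b ∈ range e) {f g : WithConv (H →ₗ[k] H)}
    (hf : ∀ x, f x ∈ range e) (hg : ∀ x, g x ∈ range e) (x : H) :
    (f * g) x ∈ range e := by
  rw [(ℛ k x).convMul_apply]
  exact Submodule.sum_mem _ fun i _ => hmul _ (hf _) _ (hg _)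

lemma comul_mem_range_map_subtype [Bialgebra k H] {e : H →ₗ[k] H}
    (he : comul ∘ₗ e = TensorProduct.map e e ∘ₗ comul) (x : H) :
    comul (e x) ∈ range (TensorProduct.map (range e).subtype (range e).subtype) :=
  ⟨TensorProduct.map e.rangeRestrict e.rangeRestrict (comul x), by
    rw [← comp_apply (TensorProduct.map _ _), ← TensorProduct.map_comp, subtype_comp_codRestrict,
      ← comp_apply (f := comul), he]
    rfl⟩

theorem antipode_mem_range [HopfAlgebra k H] [FiniteDimensional k H] {e : H →ₗ[k] H}
    (hidem : e ∘ₗ e = e) (he : comul ∘ₗ e = TensorProduct.map e e ∘ₗ comul)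
    (hone : (1 : H) ∈ range e) (hmul : ∀ a ∈ range e, ∀ b ∈ range e, a * b ∈ range e)
    (x : H) : antipode k (e x) ∈ range e := by
  have hconv := convMul_comp_of_comul_comp he
  let u : WithConv (H →ₗ[k] H) := toConv ((1 : WithConv (H →ₗ[k] H)).ofConv ∘ₗ e)
  have hS : toConv (antipode k ∘ₗ e) * toConv e = u := by
    simpa using hconv (toConv (antipode k)) (toConv id)
  have hu : u ∈ rangeEnd e := by
    refine ⟨by simp [u, comp_assoc, hidem], fun y => ?_⟩
    simpa [u, Algebra.algebraMap_eq_smul_one] using Submodule.smul_mem _ (counit (e y)) hone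
  have hu_mul : ∀ f ∈ rangeEnd e, u * f = f := fun f hf => by
    simpa [u, hf.1] using hconv 1 f
  have hSu : toConv (antipode k ∘ₗ e) * u = toConv (antipode k ∘ₗ e) := by
    simpa [u] using hconv (toConv (antipode k)) 1
  have he_mul : ∀ f ∈ rangeEnd e, toConv e * f ∈ rangeEnd e := fun f hf => by
    refine ⟨?_, convMul_apply_mem_range hmul (fun y => ⟨y, rfl⟩) hf.2⟩
    have := hconv (toConv e) f
    rw [hf.1, ofConv_toConv, hidem] at this
    exact congrArg ofConv this.symm
  have := (rangeEnd e).mem_of_mul_left_inverse_on he_mul (hS ▸ hu) (hS ▸ hu_mul) (hS ▸ hSu)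
  exact this.2 x

end Convolution

section LamL

variable {k} {H : Type*} [Ring H] [Bialgebra k H]

lemma lamL_apply_repr (l : H →ₗ[k] k) {h : H} {ι : Type*} (𝓡 : Coalgebra.Repr k h ι) :
    lamL k l h = ∑ i ∈ 𝓡.index, l (𝓡.left i) • 𝓡.right i := by
  simp [lamL, ← 𝓡.eq]

lemma comul_comp_lamL (l : H →ₗ[k] k) :
    comul ∘ₗ lamL k l = rTensor H (lamL k l) ∘ₗ comul := by
  have hsplit : map l (comul (R := k) (A := H)) = map l id ∘ₗ lTensor H comul := by
    rw [map_comp_lTensor, id_comp]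
  have hlid : (TensorProduct.lid k (H ⊗[k] H)).toLinearMap ∘ₗ map l id ∘ₗ
      (TensorProduct.assoc k H H H).toLinearMap =
      rTensor H ((TensorProduct.lid k H).toLinearMap ∘ₗ map l id) := by
    ext; simp [TensorProduct.smul_tmul']
  calc comul ∘ₗ lamL k l
      = (TensorProduct.lid k _).toLinearMap ∘ₗ map l id ∘ₗ lTensor H comul ∘ₗ comul := by
        rw [lamL, ← CoassocSimps.lid_comp_map_assoc, hsplit, comp_assoc]
    _ = rTensor H (lamL k l) ∘ₗ comul := by
        rw [← Coalgebra.coassoc]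
        simp only [← comp_assoc] at hlid ⊢
        rw [hlid, ← rTensor_comp]
        rfl

lemma lTensor_lamL_comp_comul (l : H →ₗ[k] k) :
    lTensor H (lamL k l) ∘ₗ comul = rTensor H (lamR k l) ∘ₗ comul (R := k) (A := H) := by
  have hswap : lTensor H ((TensorProduct.lid k H).toLinearMap ∘ₗ map l id) ∘ₗ
      (TensorProduct.assoc k H H H).toLinearMap =
      rTensor H ((TensorProduct.rid k H).toLinearMap ∘ₗ map id l) := by
    ext; simp [TensorProduct.tmul_smul, TensorProduct.smul_tmul']
  calc lTensor H (lamL k l) ∘ₗ comul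
      = lTensor H ((TensorProduct.lid k H).toLinearMap ∘ₗ map l id) ∘ₗ
          lTensor H comul ∘ₗ comul := by
        rw [← comp_assoc, ← lTensor_comp]
        rfl
    _ = rTensor H (lamR k l) ∘ₗ comul := by
        rw [← Coalgebra.coassoc, ← comp_assoc, hswap, ← comp_assoc, ← rTensor_comp]
        rfl

lemma lamL_smul (c : k) (l : H →ₗ[k] k) : lamL k (c • l) = c • lamL k l := by
  simp [lamL, TensorProduct.map_smul_left, smul_comp, comp_smul]

lemma comp_lamL (l m : H →ₗ[k] k) : m ∘ₗ lamL k l = pconv k l m := by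
  rw [lamL, pconv, CoassocSimps.lid_comp_map_assoc (f := l) (g := m)]

lemma lamL_comp_lamL (l m : H →ₗ[k] k) : lamL k m ∘ₗ lamL k l = lamL k (pconv k l m) := by
  rw [lamL, comp_assoc, comp_assoc, comul_comp_lamL, ← comp_assoc comul, map_comp_rTensor,
    comp_lamL]
  rfl

lemma lamR_comp_lamL (l m : H →ₗ[k] k) : lamR k m ∘ₗ lamL k l = lamL k l ∘ₗ lamR k m := by
  rw [lamR, comp_assoc, comp_assoc, comul_comp_lamL, ← comp_assoc comul, map_comp_rTensor,
    id_comp, CoassocSimps.rid_comp_map_assoc]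

lemma pconv_counit (l : H →ₗ[k] k) : pconv k l counit = l := by
  ext h
  simp [pconv, ← (ℛ k h).eq]

lemma lamL_mul_repr (l : H →ₗ[k] k) (z : H) {y : H} {ι : Type*} (𝓡 : Coalgebra.Repr k y ι) :
    lamL k l (z * y) = ∑ i ∈ 𝓡.index, lamL k (l ∘ₗ mulRight k (𝓡.left i)) z * 𝓡.right i := by
  rw [lamL_apply_repr l ((ℛ k z).mul 𝓡)]
  simp [lamL_apply_repr _ (ℛ k z), Finset.sum_mul, Finset.sum_product]
  exact Finset.sum_comm

lemma comul_comp_lamL_eq_map_of_lamL_comp_lamR {l : H →ₗ[k] k}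
    (hlr : lamL k l ∘ₗ lamR k l = lamL k l) :
    comul ∘ₗ lamL k l = map (lamL k l) (lamL k l) ∘ₗ comul := by
  rw [comul_comp_lamL, ← rTensor_comp_lTensor, comp_assoc, lTensor_lamL_comp_comul,
    ← comp_assoc, ← rTensor_comp, hlr]

lemma lamR_eq_self_of_comul_mem {l : H →ₗ[k] k} {B : Submodule k H}
    (hB : ∀ b ∈ B, l b = counit b) {a : H}
    (ha : comul a ∈ range (map B.subtype B.subtype)) : lamR k l a = a := by
  obtain ⟨t, ht⟩ := ha
  have hl : l ∘ₗ B.subtype = counit ∘ₗ B.subtype := LinearMap.ext fun b => hB b b.2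
  have hmap : lTensor H l ∘ₗ map B.subtype B.subtype =
      lTensor H counit ∘ₗ map B.subtype B.subtype := by
    rw [lTensor_comp_map, lTensor_comp_map, hl]
  calc lamR k l a = TensorProduct.rid k H (lTensor H l (map B.subtype B.subtype t)) := by
        rw [ht]; rfl
    _ = TensorProduct.rid k H (lTensor H counit (comul a)) := by
        rw [← comp_apply (lTensor H l), hmap, comp_apply, ht]
    _ = a := by simp

end LamL

namespace IsPartialAction

variable {k} {H : Type*} [Ring H] [Bialgebra k H] {l : H →ₗ[k] k}

lemma pconv_comp_mulRight (hpa : IsPartialAction k l) (v : H) :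
    pconv k l (l ∘ₗ mulRight k v) = l v • l := by
  ext h
  rw [← hpa.2 h v, LinearMap.smul_apply, smul_eq_mul, mul_comm]

lemma pconv_self (hpa : IsPartialAction k l) : pconv k l l = l := by
  simpa [hpa.1] using hpa.pconv_comp_mulRight 1

lemma lamL_comp_self (hpa : IsPartialAction k l) : lamL k l ∘ₗ lamL k l = lamL k l := by
  rw [lamL_comp_lamL, hpa.pconv_self]

lemma comp_lamL_self (hpa : IsPartialAction k l) : l ∘ₗ lamL k l = l := by
  rw [comp_lamL, hpa.pconv_self]

lemma apply_eq_counit_of_mem_range (hpa : IsPartialAction k l) {b : H}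
    (hb : b ∈ range (lamL k l)) : l b = counit b := by
  obtain ⟨h, rfl⟩ := hb
  rw [← comp_apply (f := l), hpa.comp_lamL_self, ← comp_apply (f := counit), comp_lamL,
    pconv_counit]

lemma lamL_one (hpa : IsPartialAction k l) : lamL k l 1 = 1 := by
  simp [lamL, Algebra.TensorProduct.one_def, hpa.1]

lemma lamL_mul_lamL (hpa : IsPartialAction k l) (x y : H) :
    lamL k l x * lamL k l y = lamL k l (lamL k l x * y) := by
  rw [lamL_mul_repr l _ (ℛ k y), lamL_apply_repr l (ℛ k y), Finset.mul_sum]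
  refine Finset.sum_congr rfl fun i _ => ?_
  rw [← comp_apply (lamL k _), lamL_comp_lamL, hpa.pconv_comp_mulRight, lamL_smul,
    LinearMap.smul_apply, smul_mul_assoc, mul_smul_comm]

lemma mul_mem_range (hpa : IsPartialAction k l) {a b : H} (ha : a ∈ range (lamL k l))
    (hb : b ∈ range (lamL k l)) : a * b ∈ range (lamL k l) := by
  obtain ⟨x, rfl⟩ := ha
  obtain ⟨y, rfl⟩ := hb
  exact ⟨_, (hpa.lamL_mul_lamL x y).symm⟩

end IsPartialAction

/-- for finite-dimensional `H`, `H_l` (range of `lamL`) is a Hopf subalgebra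
of `H` (closed under comultiplication and antipode) iff `l(h₁)h₂ = l(h₁)h₂ l(h₃)` for all
`h`, the right-hand side being `lamL (lamR h)`. -/
theorem range_lamL_hopfSubalgebra_iff {H : Type*} [Ring H] [HopfAlgebra k H]
    [FiniteDimensional k H] {l : H →ₗ[k] k} (hpa : IsPartialAction k l) :
    ((∀ a ∈ LinearMap.range (lamL k l),
        comul (R := k) a ∈ LinearMap.range
          (TensorProduct.map (LinearMap.range (lamL k l)).subtype
            (LinearMap.range (lamL k l)).subtype)) ∧
      (∀ a ∈ LinearMap.range (lamL k l), antipode (R := k) a ∈ LinearMap.range (lamL k l)))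
    ↔ (∀ h : H, lamL k l h = lamL k l (lamR k l h)) := by
  constructor
  · rintro ⟨hcomul, -⟩ h
    have hfix : lamR k l (lamL k l h) = lamL k l h :=
      lamR_eq_self_of_comul_mem (fun _ hb => hpa.apply_eq_counit_of_mem_range hb)
        (hcomul _ ⟨h, rfl⟩)
    rw [← comp_apply (f := lamL k l), ← lamR_comp_lamL, comp_apply, hfix]
  · intro hlr
    have he := comul_comp_lamL_eq_map_of_lamL_comp_lamR (LinearMap.ext fun h => (hlr h).symm)
    refine ⟨?_, ?_⟩ <;> rintro _ ⟨h, rfl⟩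
    · exact comul_mem_range_map_subtype he h
    · exact antipode_mem_range hpa.lamL_comp_self he ⟨1, hpa.lamL_one⟩
        (fun _ ha _ hb => hpa.mul_mem_range ha hb) h
end

section
/- Let λ : H → k be a partial action of a Hopf algebra H on k. If λ(h₁)h₂ = h₁λ(h₂) for all h ∈ H, then λ(h₁)h₂ = λ(h₁)h₂λ(h₃) for all h ∈ H. -/
open TensorProduct Coalgebra HopfAlgebra

variable (k : Type*) [Field k]

/-! Applying the hypothesis to `lamR h` turns `λ(h₁)h₂λ(h₃)` into `h₁λ(h₂)λ(h₃)`, and by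
coassociativity `λ(h₂)λ(h₃)` is `λ` convolved with itself, which the partial-action identity
with second argument `1` collapses back to `λ`. -/

open LinearMap

section
variable {k} {H : Type*} [Ring H] [Bialgebra k H]

theorem lamR_comp_lamR (l m : H →ₗ[k] k) :
    lamR k l ∘ₗ lamR k m = lamR k (pconv k l m) := by
  let ρ : H ⊗[k] k →ₗ[k] H := TensorProduct.rid k H
  have natural : lamR k l ∘ₗ ρ ∘ₗ lTensor H m = ρ ∘ₗ lTensor H m ∘ₗ rTensor H (lamR k l) := by
    ext x y; simp [ρ]
  have collapse : ρ ∘ₗ lTensor H m ∘ₗ rTensor H (ρ ∘ₗ lTensor H l) =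
      ρ ∘ₗ lTensor H ((TensorProduct.lid k k).toLinearMap ∘ₗ TensorProduct.map l m) ∘ₗ
        (TensorProduct.assoc k H H H).toLinearMap := by
    ext x y z; simp [ρ, smul_smul, mul_comm]
  calc lamR k l ∘ₗ lamR k m
      = (lamR k l ∘ₗ ρ ∘ₗ lTensor H m) ∘ₗ comul := rfl
    _ = ρ ∘ₗ lTensor H m ∘ₗ rTensor H (ρ ∘ₗ lTensor H l ∘ₗ comul) ∘ₗ comul := by
        rw [natural]; simp only [comp_assoc]; rfl
    _ = (ρ ∘ₗ lTensor H m ∘ₗ rTensor H (ρ ∘ₗ lTensor H l)) ∘ₗ rTensor H comul ∘ₗ comul := by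
        simp only [rTensor_comp, comp_assoc]
    _ = ρ ∘ₗ lTensor H ((TensorProduct.lid k k).toLinearMap ∘ₗ TensorProduct.map l m) ∘ₗ
        lTensor H comul ∘ₗ comul := by
        rw [collapse, ← coassoc]; simp only [comp_assoc]
    _ = ρ ∘ₗ lTensor H (pconv k l m) ∘ₗ comul := by
        simp only [pconv, lTensor_comp, comp_assoc]
    _ = lamR k (pconv k l m) := rfl

theorem IsPartialAction.pconv_self_s12 {l : H →ₗ[k] k} (hpa : IsPartialAction k l) :
    pconv k l l = l := by
  ext h
  simpa [hpa.1] using (hpa.2 h 1).symm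

end

/-- if `l(h₁)h₂ = h₁ l(h₂)` for all `h`, then
`l(h₁)h₂ = l(h₁)h₂ l(h₃)` for all `h` (the RHS being `lamL (lamR h)`). -/
theorem lamL_eq_lamR_implies {H : Type*} [Ring H] [HopfAlgebra k H]
    {l : H →ₗ[k] k} (hpa : IsPartialAction k l)
    (hsym : ∀ h : H, lamL k l h = lamR k l h) :
    ∀ h : H, lamL k l h = lamL k l (lamR k l h) := by
  intro h
  calc lamL k l h = lamR k l h := hsym h
    _ = lamR k (pconv k l l) h := by rw [hpa.pconv_self_s12]
    _ = lamR k l (lamR k l h) := (LinearMap.congr_fun (lamR_comp_lamR l l) h).symm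
    _ = lamL k l (lamR k l h) := (hsym _).symm
end

section
/- Let n ≥ 2 and k ≥ 1 be integers, ω a primitive kn-th root of unity in an algebraically closed field of characteristic zero, and T_n^k(ω) the generalized Taft algebra generated by g, x with g^{kn} = 1, x^n = 0, xg = ω gx, where g is group-like and x is (1, g^k)-primitive. Then the linear map λ on the basis {gⁱxʲ : 0 ≤ i ≤ kn−1, 0 ≤ j ≤ n−1} defined by λ(gⁱxʲ) = δ_{j,0}·[gⁱ ∈ ⟨g^k⟩] is a partial action of T_n^k(ω) on the base field, and the resulting subalgebra (T_n^k(ω))_λ = {λ(u₁)u₂ | u} is a Hopf subalgebra isomorphic to the Taft algebra T_n(ω^k). -/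
open TensorProduct Coalgebra HopfAlgebra

variable (k : Type*) [Field k]

/-!
The functional `λ` vanishes on the left ideal `H x` and is the indicator of `⟨g^K⟩` on the powers
of `g`. Since `Δ(xʲ) = g^{Kj} ⊗ xʲ + t (x ⊗ 1)` for some `t`, this gives `λ(u₁)u₂ = [K ∣ i] gⁱxʲ`
for `u = gⁱxʲ`, so `H_λ` is spanned by the `g^{rK}xʲ` and is the subalgebra generated by `g^K` and
`x`. The partial action identity reduces to `λ(gⁱxʲ v) = δ_{j,0} λ(v)` for `K ∣ i`. That subalgebra
is stable under `Δ` and the antipode because its generators are and both maps are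
(anti-)multiplicative; the antipode of `g^K` is a multiple of `(g^K)^{n-1}`.
-/

section HopfSubalgebra

variable {R A : Type*} [CommSemiring R] [Semiring A]

theorem Bialgebra.comul_mem_range_map_adjoin [Bialgebra R A] {s : Set A}
    (hs : ∀ a ∈ s, comul a ∈ (Algebra.TensorProduct.map (Algebra.adjoin R s).val
      (Algebra.adjoin R s).val).range)
    {a : A} (ha : a ∈ Algebra.adjoin R s) :
    comul a ∈ (Algebra.TensorProduct.map (Algebra.adjoin R s).val
      (Algebra.adjoin R s).val).range := by
  induction ha using Algebra.adjoin_induction with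
  | mem a ha => exact hs a ha
  | algebraMap r => rw [Bialgebra.comul_algebraMap]; exact Subalgebra.algebraMap_mem _ r
  | add a b _ _ ha hb => rw [map_add]; exact add_mem ha hb
  | mul a b _ _ ha hb => rw [Bialgebra.comul_mul]; exact mul_mem ha hb

theorem HopfAlgebra.antipode_mem_adjoin [HopfAlgebra R A] {s : Set A}
    (hs : ∀ a ∈ s, antipode R a ∈ Algebra.adjoin R s)
    {a : A} (ha : a ∈ Algebra.adjoin R s) : antipode R a ∈ Algebra.adjoin R s := by
  induction ha using Algebra.adjoin_induction with
  | mem a ha => exact hs a ha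
  | algebraMap r =>
    rw [Algebra.algebraMap_eq_smul_one, map_smul, antipode_one]
    exact Subalgebra.smul_mem _ (one_mem _) r
  | add a b _ _ ha hb => rw [map_add]; exact add_mem ha hb
  | mul a b _ _ ha hb => rw [antipode_mul_antidistrib]; exact mul_mem hb ha

end HopfSubalgebra

section Sweedler

variable {k} {H : Type*} [Ring H] [Bialgebra k H]

theorem pconv_eq_comp_lamL (l m : H →ₗ[k] k) : pconv k l m = m ∘ₗ lamL k l := by
  have h : (TensorProduct.lid k k).toLinearMap ∘ₗ TensorProduct.map l m =
      m ∘ₗ (TensorProduct.lid k H).toLinearMap ∘ₗ TensorProduct.map l LinearMap.id :=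
    TensorProduct.ext' fun a b => by simp
  exact LinearMap.ext fun u => LinearMap.congr_fun h (comul u)

theorem lid_map_mul_tmul_one_eq_zero {l : H →ₗ[k] k} {x : H} (hl : ∀ a, l (a * x) = 0)
    (t : H ⊗[k] H) :
    TensorProduct.lid k H (TensorProduct.map l LinearMap.id (t * (x ⊗ₜ 1))) = 0 := by
  induction t using TensorProduct.induction_on with
  | zero => simp
  | tmul a b => simp [hl]
  | add s t hs ht => rw [add_mul, map_add, map_add, hs, ht, add_zero]

end Sweedler

namespace GeneralizedTaft

section Relations

variable {R A : Type*} [CommSemiring R] [Semiring A] [Algebra R A] {ω : R} {g x : A}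

theorem pow_mul_pow_of_mul_eq_smul (hcomm : x * g = ω • (g * x)) (a b : ℕ) :
    x ^ b * g ^ a = ω ^ (a * b) • (g ^ a * x ^ b) := by
  have hx_gpow (a : ℕ) : x * g ^ a = ω ^ a • (g ^ a * x) := by
    induction a with
    | zero => simp
    | succ a ih =>
      rw [pow_succ, ← mul_assoc, ih, smul_mul_assoc, mul_assoc, hcomm, mul_smul_comm,
        smul_smul, ← mul_assoc, ← pow_succ, ← pow_succ]
  induction b with
  | zero => simp
  | succ b ih =>
    rw [pow_succ, mul_assoc, hx_gpow, mul_smul_comm, ← mul_assoc, ih, smul_mul_assoc, smul_smul,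
      mul_assoc, ← pow_succ, ← pow_add, mul_add, mul_one, add_comm a]

theorem monomial_mul_monomial (hcomm : x * g = ω • (g * x)) (i j a b : ℕ) :
    (g ^ i * x ^ j) * (g ^ a * x ^ b) = ω ^ (a * j) • (g ^ (i + a) * x ^ (j + b)) := by
  rw [mul_assoc, ← mul_assoc (x ^ j), pow_mul_pow_of_mul_eq_smul hcomm, smul_mul_assoc,
    mul_smul_comm, mul_assoc, ← pow_add, ← mul_assoc, ← pow_add]

end Relations

section Comultiplication

variable {R A : Type*} [CommSemiring R] [Semiring A] [Bialgebra R A] {ω : R} {g x : A} {K : ℕ}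

theorem comul_pow_eq_add_mul (hcomm : x * g = ω • (g * x))
    (hx : comul (R := R) x = x ⊗ₜ[R] 1 + (g ^ K) ⊗ₜ[R] x) (j : ℕ) :
    ∃ t : A ⊗[R] A, comul (R := R) (x ^ j) = (g ^ (K * j)) ⊗ₜ (x ^ j) + t * (x ⊗ₜ 1) := by
  induction j with
  | zero => exact ⟨0, by simp [Algebra.TensorProduct.one_def]⟩
  | succ j ih =>
    obtain ⟨t, ht⟩ := ih
    have hxg : x * g ^ K = ω ^ K • (g ^ K * x) := by
      simpa using pow_mul_pow_of_mul_eq_smul hcomm K 1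
    have hswap : (x ⊗ₜ[R] (1 : A)) * ((g ^ K) ⊗ₜ x) = ω ^ K • (((g ^ K) ⊗ₜ x) * (x ⊗ₜ 1)) := by
      rw [Algebra.TensorProduct.tmul_mul_tmul, Algebra.TensorProduct.tmul_mul_tmul, mul_one,
        one_mul, hxg, TensorProduct.smul_tmul']
    have htop : (g ^ (K * (j + 1))) ⊗ₜ[R] (x ^ (j + 1)) =
        ((g ^ (K * j)) ⊗ₜ (x ^ j)) * ((g ^ K) ⊗ₜ x) := by
      rw [Algebra.TensorProduct.tmul_mul_tmul, ← pow_add, ← pow_succ, mul_add, mul_one]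
    refine ⟨(g ^ (K * j)) ⊗ₜ (x ^ j) + t * (x ⊗ₜ 1) + ω ^ K • (t * ((g ^ K) ⊗ₜ x)), ?_⟩
    rw [htop, pow_succ, Bialgebra.comul_mul, ht, hx]
    simp only [mul_add, add_mul, mul_assoc, smul_mul_assoc, hswap, mul_smul_comm]
    abel

end Comultiplication

section LamL

variable {k} {H : Type*} [Ring H] [Bialgebra k H] {ω : k} {g x : H} {K : ℕ}

theorem lamL_monomial (hg : comul (R := k) g = g ⊗ₜ[k] g) (hcomm : x * g = ω • (g * x))
    (hx : comul (R := k) x = x ⊗ₜ[k] 1 + (g ^ K) ⊗ₜ[k] x) {l : H →ₗ[k] k}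
    (hlx : ∀ a, l (a * x) = 0) (i j : ℕ) :
    lamL k l (g ^ i * x ^ j) = l (g ^ (i + K * j)) • (g ^ i * x ^ j) := by
  obtain ⟨t, ht⟩ := comul_pow_eq_add_mul hcomm hx j
  have hcomul : comul (R := k) (g ^ i * x ^ j) =
      (g ^ (i + K * j)) ⊗ₜ (g ^ i * x ^ j) + ((g ^ i) ⊗ₜ (g ^ i) * t) * (x ⊗ₜ 1) := by
    rw [Bialgebra.comul_mul, Bialgebra.comul_pow, hg, Algebra.TensorProduct.tmul_pow, ht,
      mul_add, Algebra.TensorProduct.tmul_mul_tmul, ← pow_add, mul_assoc]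
  simp [lamL, hcomul, lid_map_mul_tmul_one_eq_zero hlx]

end LamL

section Functional

variable {k} {H : Type*} [Ring H] [Algebra k H] {n K : ℕ} {ω : k} {g x : H}
  {B : Module.Basis (Fin (K * n) × Fin n) k H}

theorem constr_apply_monomial (hB : ∀ p, B p = g ^ (p.1 : ℕ) * x ^ (p.2 : ℕ))
    (hKn : 0 < K * n) (hgord : g ^ (K * n) = 1) (hxn : x ^ n = 0) (a b : ℕ) :
    B.constr k (fun p => if (p.2 : ℕ) = 0 ∧ K ∣ (p.1 : ℕ) then (1 : k) else 0) (g ^ a * x ^ b) =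
      if b = 0 ∧ K ∣ a then 1 else 0 := by
  by_cases hb : b < n
  · rw [pow_eq_pow_mod a hgord, ← hB (⟨a % (K * n), Nat.mod_lt a hKn⟩, ⟨b, hb⟩),
      Module.Basis.constr_basis]
    simp [Nat.dvd_mod_iff (dvd_mul_right K n)]
  · have hn := Nat.pos_of_mul_pos_left hKn
    rw [pow_eq_zero_of_le (not_lt.mp hb) hxn, mul_zero, map_zero, if_neg (by omega)]

variable (hB : ∀ p, B p = g ^ (p.1 : ℕ) * x ^ (p.2 : ℕ)) {l : H →ₗ[k] k}
  (hl : ∀ a b : ℕ, l (g ^ a * x ^ b) = if b = 0 ∧ K ∣ a then 1 else 0)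
include hB hl

theorem apply_mul_right_eq_zero (a : H) : l (a * x) = 0 := by
  have h : l ∘ₗ LinearMap.mulRight k x = 0 :=
    B.ext fun p => by simp [hB, mul_assoc, ← pow_succ, hl]
  exact LinearMap.congr_fun h a

theorem apply_monomial_mul (hcomm : x * g = ω • (g * x)) {i : ℕ} (hi : K ∣ i) (j : ℕ) (v : H) :
    l (g ^ i * x ^ j * v) = if j = 0 then l v else 0 := by
  have h : l ∘ₗ LinearMap.mulLeft k (g ^ i * x ^ j) = if j = 0 then l else 0 := by
    refine B.ext fun p => ?_
    rw [LinearMap.comp_apply, LinearMap.mulLeft_apply, hB, monomial_mul_monomial hcomm, map_smul,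
      hl]
    rcases eq_or_ne j 0 with rfl | hj
    · simp [hl, Nat.dvd_add_right hi]
    · simp [hj]
  rw [← LinearMap.mulLeft_apply k, ← LinearMap.comp_apply, h]
  split_ifs <;> rfl

end Functional

section PartialAction

variable {k} {H : Type*} [Ring H] [Bialgebra k H] {n K : ℕ} {ω : k} {g x : H}
  {B : Module.Basis (Fin (K * n) × Fin n) k H} (hB : ∀ p, B p = g ^ (p.1 : ℕ) * x ^ (p.2 : ℕ))
  {l : H →ₗ[k] k} (hl : ∀ a b : ℕ, l (g ^ a * x ^ b) = if b = 0 ∧ K ∣ a then 1 else 0)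
  (hg : comul (R := k) g = g ⊗ₜ[k] g) (hcomm : x * g = ω • (g * x))
  (hx : comul (R := k) x = x ⊗ₜ[k] 1 + (g ^ K) ⊗ₜ[k] x)
include hB hl hg hcomm hx

theorem lamL_monomial_eq_ite (i j : ℕ) :
    lamL k l (g ^ i * x ^ j) = if K ∣ i then g ^ i * x ^ j else 0 := by
  have hgpow : l (g ^ (i + K * j)) = if K ∣ i then 1 else 0 := by
    simpa [Nat.dvd_add_left (dvd_mul_right K j)] using hl (i + K * j) 0
  rw [lamL_monomial hg hcomm hx (apply_mul_right_eq_zero hB hl), hgpow, ite_smul, one_smul,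
    zero_smul]

theorem isPartialAction : IsPartialAction k l := by
  refine ⟨by simpa using hl 0 0, fun u v => ?_⟩
  have h : l v • l = (l ∘ₗ LinearMap.mulRight k v) ∘ₗ lamL k l := by
    refine B.ext fun p => ?_
    rw [hB, LinearMap.comp_apply, lamL_monomial_eq_ite hB hl hg hcomm hx]
    by_cases hi : K ∣ (p.1 : ℕ)
    · simp [hl, hi, apply_monomial_mul hB hl hcomm hi]
    · simp [hl, hi]
  rw [pconv_eq_comp_lamL, ← LinearMap.congr_fun h u, LinearMap.smul_apply, smul_eq_mul,
    mul_comm]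

theorem range_lamL_eq_span :
    LinearMap.range (lamL k l) =
      Submodule.span k {u : H | ∃ r j : Fin n, u = g ^ ((r : ℕ) * K) * x ^ (j : ℕ)} := by
  apply le_antisymm
  · rw [LinearMap.range_eq_map, ← B.span_eq, Submodule.map_span, Submodule.span_le]
    rintro _ ⟨_, ⟨p, rfl⟩, rfl⟩
    rw [hB, lamL_monomial_eq_ite hB hl hg hcomm hx]
    split_ifs with hi
    · obtain ⟨r, hr⟩ := hi
      have hrn : r < n := Nat.lt_of_mul_lt_mul_left (hr ▸ p.1.isLt)
      exact Submodule.subset_span ⟨⟨r, hrn⟩, p.2, by rw [hr, mul_comm]⟩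
    · exact zero_mem _
  · rw [Submodule.span_le]
    rintro _ ⟨r, j, rfl⟩
    exact ⟨_, by rw [lamL_monomial_eq_ite hB hl hg hcomm hx, if_pos (dvd_mul_left K r)]⟩

end PartialAction

section Subalgebra

variable {R A : Type*} [CommSemiring R] [Semiring A] [Algebra R A] {n K : ℕ} {ω : R} {g x : A}

theorem monomial_mem_span (hgord : g ^ (K * n) = 1) (hxn : x ^ n = 0) (hn : 0 < n) (s b : ℕ) :
    g ^ (s * K) * x ^ b ∈
      Submodule.span R {u : A | ∃ r j : Fin n, u = g ^ ((r : ℕ) * K) * x ^ (j : ℕ)} := by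
  by_cases hb : b < n
  · have hgK : (g ^ K) ^ n = 1 := by rw [← pow_mul, hgord]
    rw [pow_mul', pow_eq_pow_mod s hgK, ← pow_mul']
    exact Submodule.subset_span ⟨⟨s % n, Nat.mod_lt s hn⟩, ⟨b, hb⟩, rfl⟩
  · rw [pow_eq_zero_of_le (not_lt.mp hb) hxn, mul_zero]
    exact zero_mem _

theorem span_eq_adjoin (hcomm : x * g = ω • (g * x)) (hgord : g ^ (K * n) = 1)
    (hxn : x ^ n = 0) (hn : 0 < n) :
    Submodule.span R {u : A | ∃ r j : Fin n, u = g ^ ((r : ℕ) * K) * x ^ (j : ℕ)} =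
      Subalgebra.toSubmodule (Algebra.adjoin R {g ^ K, x}) := by
  set M := Submodule.span R {u : A | ∃ r j : Fin n, u = g ^ ((r : ℕ) * K) * x ^ (j : ℕ)}
  have hgK : g ^ K ∈ Algebra.adjoin R {g ^ K, x} := Algebra.subset_adjoin (by simp)
  have hx : x ∈ Algebra.adjoin R {g ^ K, x} := Algebra.subset_adjoin (by simp)
  apply le_antisymm
  · rw [Submodule.span_le]
    rintro _ ⟨r, j, rfl⟩
    rw [pow_mul', SetLike.mem_coe, Subalgebra.mem_toSubmodule]
    exact mul_mem (pow_mem hgK _) (pow_mem hx _)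
  · have hMM : M * M ≤ M := by
      rw [Submodule.span_mul_span, Submodule.span_le]
      rintro _ ⟨_, ⟨r, j, rfl⟩, _, ⟨s, i, rfl⟩, rfl⟩
      dsimp only
      rw [monomial_mul_monomial hcomm, ← add_mul]
      exact Submodule.smul_mem _ _ (monomial_mem_span hgord hxn hn _ _)
    have hone : (1 : A) ∈ M := by simpa using monomial_mem_span hgord hxn hn 0 0
    have hle : Algebra.adjoin R {g ^ K, x} ≤
        M.toSubalgebra hone fun a b ha hb => hMM (Submodule.mul_mem_mul ha hb) := by
      rw [Algebra.adjoin_le_iff, Set.insert_subset_iff, Set.singleton_subset_iff]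
      simp only [SetLike.mem_coe, Submodule.mem_toSubalgebra]
      constructor
      · simpa using monomial_mem_span (x := x) hgord hxn hn 1 0
      · simpa using monomial_mem_span hgord hxn hn 0 1
    exact hle

end Subalgebra

section HopfSubalgebra

variable {R A : Type*} [CommRing R] [Ring A] [HopfAlgebra R A] {n K : ℕ} {g x : A}

theorem comul_mem_range_map_adjoin (hg : comul (R := R) g = g ⊗ₜ[R] g)
    (hx : comul (R := R) x = x ⊗ₜ[R] 1 + (g ^ K) ⊗ₜ[R] x) {a : A}
    (ha : a ∈ Algebra.adjoin R {g ^ K, x}) :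
    comul (R := R) a ∈ (Algebra.TensorProduct.map (Algebra.adjoin R {g ^ K, x}).val
      (Algebra.adjoin R {g ^ K, x}).val).range := by
  have hgK : g ^ K ∈ Algebra.adjoin R {g ^ K, x} := Algebra.subset_adjoin (by simp)
  have hxA : x ∈ Algebra.adjoin R {g ^ K, x} := Algebra.subset_adjoin (by simp)
  refine Bialgebra.comul_mem_range_map_adjoin (fun b hb => ?_) ha
  rcases hb with rfl | rfl
  · exact ⟨⟨_, hgK⟩ ⊗ₜ ⟨_, hgK⟩,
      by simp [Bialgebra.comul_pow, hg, Algebra.TensorProduct.tmul_pow]⟩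
  · exact ⟨⟨_, hxA⟩ ⊗ₜ 1 + ⟨_, hgK⟩ ⊗ₜ ⟨_, hxA⟩, by simp [hx]⟩

theorem antipode_mem_adjoin (hg : comul (R := R) g = g ⊗ₜ[R] g)
    (hx : comul (R := R) x = x ⊗ₜ[R] 1 + (g ^ K) ⊗ₜ[R] x) (hgord : g ^ (K * n) = 1) (hn : 0 < n)
    {a : A} (ha : a ∈ Algebra.adjoin R {g ^ K, x}) :
    antipode R a ∈ Algebra.adjoin R {g ^ K, x} := by
  have hgK : g ^ K ∈ Algebra.adjoin R {g ^ K, x} := Algebra.subset_adjoin (by simp)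
  have hxA : x ∈ Algebra.adjoin R {g ^ K, x} := Algebra.subset_adjoin (by simp)
  have hSg : antipode R (g ^ K) * g ^ K = algebraMap R A (counit (g ^ K)) := by
    simpa [Bialgebra.comul_pow, hg, Algebra.TensorProduct.tmul_pow] using
      mul_antipode_rTensor_comul_apply (R := R) (g ^ K)
  have hSgK : antipode R (g ^ K) = algebraMap R A (counit (g ^ K)) * (g ^ K) ^ (n - 1) := by
    calc antipode R (g ^ K) = antipode R (g ^ K) * (g ^ K) ^ n := by
          rw [← pow_mul, hgord, mul_one]
      _ = antipode R (g ^ K) * g ^ K * (g ^ K) ^ (n - 1) := by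
          rw [mul_assoc, ← pow_succ', Nat.sub_add_cancel hn]
      _ = _ := by rw [hSg]
  have hSx : antipode R x = algebraMap R A (counit x) - antipode R (g ^ K) * x := by
    refine eq_sub_of_add_eq ?_
    simpa [hx] using mul_antipode_rTensor_comul_apply (R := R) x
  refine HopfAlgebra.antipode_mem_adjoin (fun b hb => ?_) ha
  rcases hb with rfl | rfl
  · rw [hSgK]
    exact mul_mem (Subalgebra.algebraMap_mem _ _) (pow_mem hgK _)
  · rw [hSx, hSgK]
    exact sub_mem (Subalgebra.algebraMap_mem _ _)
      (mul_mem (mul_mem (Subalgebra.algebraMap_mem _ _) (pow_mem hgK _)) hxA)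

end HopfSubalgebra

end GeneralizedTaft

theorem taft_lambdaHopf_general {k : Type*} [Field k]
    {H : Type*} [Ring H] [HopfAlgebra k H]
    (n K : ℕ) (hn : 2 ≤ n) (hK : 1 ≤ K) (ω : k)
    (g x : H)
    (hg : comul (R := k) g = g ⊗ₜ[k] g)
    (hgord : g ^ (K * n) = 1)
    (hxn : x ^ n = 0)
    (hcomm : x * g = ω • (g * x))
    (hx : comul (R := k) x = x ⊗ₜ[k] 1 + (g ^ K) ⊗ₜ[k] x)
    (B : Module.Basis (Fin (K * n) × Fin n) k H)
    (hB : ∀ p : Fin (K * n) × Fin n, B p = g ^ (p.1 : ℕ) * x ^ (p.2 : ℕ)) :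
    ∀ l : H →ₗ[k] k,
      l = B.constr k (fun p => if (p.2 : ℕ) = 0 ∧ K ∣ (p.1 : ℕ) then (1 : k) else 0) →
      IsPartialAction k l ∧
      LinearMap.range (lamL k l) =
        Submodule.span k
          {u : H | ∃ r : Fin n, ∃ j : Fin n, u = g ^ ((r : ℕ) * K) * x ^ (j : ℕ)} ∧
      (∀ a ∈ LinearMap.range (lamL k l),
        comul (R := k) a ∈ LinearMap.range
          (TensorProduct.map (LinearMap.range (lamL k l)).subtype
            (LinearMap.range (lamL k l)).subtype)) ∧
      (∀ a ∈ LinearMap.range (lamL k l),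
        antipode (R := k) a ∈ LinearMap.range (lamL k l)) := by
  rintro l rfl
  have hn₀ : 0 < n := by omega
  have hl := GeneralizedTaft.constr_apply_monomial hB (Nat.mul_pos hK hn₀) hgord hxn
  have hrange := GeneralizedTaft.range_lamL_eq_span hB hl hg hcomm hx
  have hrange_adjoin := hrange.trans (GeneralizedTaft.span_eq_adjoin hcomm hgord hxn hn₀)
  refine ⟨GeneralizedTaft.isPartialAction hB hl hg hcomm hx, hrange, ?_, ?_⟩ <;> rw [hrange_adjoin]
  · exact fun a => GeneralizedTaft.comul_mem_range_map_adjoin hg hx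
  · exact fun a => GeneralizedTaft.antipode_mem_adjoin hg hx hgord hn₀

/-- for the generalized Taft algebra `T_n^K(ω)` (presented abstractly: a
Hopf algebra with group-like `g` of order `K*n`, a `(1, g^K)`-primitive `x` with `x^n = 0`
and `x g = ω g x`, and basis `{gⁱ xʲ}`), the functional `λ(gⁱxʲ) = δ_{j,0}·[K ∣ i]` is a
partial action on the base field, and the resulting subalgebra `(T_n^K(ω))_λ` is a Hopf
subalgebra equal to the span of `{g^{rK} xʲ}`, i.e. the image of the Taft algebra
`T_n(ω^K)` under its canonical embedding. -/
theorem taft_lambdaHopf {k : Type*} [Field k] [IsAlgClosed k] [CharZero k]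
    {H : Type*} [Ring H] [HopfAlgebra k H]
    (n K : ℕ) (hn : 2 ≤ n) (hK : 1 ≤ K) (ω : k) (hω : IsPrimitiveRoot ω (K * n))
    (g x : H)
    (hg : comul (R := k) g = g ⊗ₜ[k] g)
    (hgord : g ^ (K * n) = 1)
    (hxn : x ^ n = 0)
    (hcomm : x * g = ω • (g * x))
    (hx : comul (R := k) x = x ⊗ₜ[k] 1 + (g ^ K) ⊗ₜ[k] x)
    (B : Module.Basis (Fin (K * n) × Fin n) k H)
    (hB : ∀ p : Fin (K * n) × Fin n, B p = g ^ (p.1 : ℕ) * x ^ (p.2 : ℕ)) :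
    ∀ l : H →ₗ[k] k,
      l = B.constr k (fun p => if (p.2 : ℕ) = 0 ∧ K ∣ (p.1 : ℕ) then (1 : k) else 0) →
      IsPartialAction k l ∧
      LinearMap.range (lamL k l) =
        Submodule.span k
          {u : H | ∃ r : Fin n, ∃ j : Fin n, u = g ^ ((r : ℕ) * K) * x ^ (j : ℕ)} ∧
      (∀ a ∈ LinearMap.range (lamL k l),
        comul (R := k) a ∈ LinearMap.range
          (TensorProduct.map (LinearMap.range (lamL k l)).subtype
            (LinearMap.range (lamL k l)).subtype)) ∧
      (∀ a ∈ LinearMap.range (lamL k l),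
        antipode (R := k) a ∈ LinearMap.range (lamL k l)) :=
  taft_lambdaHopf_general n K hn hK ω g x hg hgord hxn hcomm hx B hB
end
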